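/- Let G be a simple connected graph with m = d+1 vertices, incidence matrix A_G ∈ ℤ^{(d+1)×n}, and let σ ∈ Aut(G) be a graph automorphism. Then ω ∈ ∇_{A_G,𝟏} ⊂ ℂ^{d+1} if and only if σ(ω) ∈ ∇_{A_G,𝟏}, where σ acts on ω by permuting coordinates. The key fact is that the map f_G : (ℂ*)^{d+1} → ℂ^{d+1}, f_G(v) = A_G·ψ_{A_G,𝟏}(v), whose k-th coordinate equals Σ_{(k,j)∈E_k} (1/(2i))·(v_k v_j^{−1} − v_k^{−1} v_j) (summing over edges adjacent to vertex k), is Aut(G)-equivariant: f_G(σ(v)) = σ(f_G(v)) for all v ∈ (ℂ*)^{d+1}. -/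

import Mathlib

noncomputable section


/-- A subset of `ℂⁿ` is Zariski closed if it is the common zero locus
of a set of polynomials. -/
def ZClosed {n : ℕ} (S : Set (Fin n → ℂ)) : Prop :=
  ∃ I : Set (MvPolynomial (Fin n) ℂ),
    S = {x | ∀ p ∈ I, MvPolynomial.eval x p = 0}

/-- Irreducibility with respect to the Zariski topology on `ℂⁿ`. -/
def ZIrred {n : ℕ} (S : Set (Fin n → ℂ)) : Prop :=
  S.Nonempty ∧ ∀ F G : Set (Fin n → ℂ), ZClosed F → ZClosed G →
    S ⊆ F ∪ G → (S ⊆ F ∨ S ⊆ G)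

/-- Dimension of a subset of `ℂⁿ`: Krull dimension of the poset of irreducible
Zariski closed subsets contained in it. -/
def ZDim {n : ℕ} (S : Set (Fin n → ℂ)) : WithBot ℕ∞ :=
  Order.krullDim {T : Set (Fin n → ℂ) // ZClosed T ∧ ZIrred T ∧ T ⊆ S}

/-- Zariski closure in `ℂⁿ`. -/
def ZClosure {n : ℕ} (S : Set (Fin n → ℂ)) : Set (Fin n → ℂ) :=
  ⋂₀ {F | ZClosed F ∧ S ⊆ F}

/-- A property `P` of points of `ℂ^σ` holds generically if it holds on the
nonvanishing locus of some nonzero polynomial. -/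
def GenericProp {σ : Type} (P : (σ → ℂ) → Prop) : Prop :=
  ∃ p : MvPolynomial σ ℂ, p ≠ 0 ∧ ∀ x : σ → ℂ, MvPolynomial.eval x p ≠ 0 → P x

/-- `S ⊆ ℂⁿ` (of dimension `d`) has degree `k`: a generic affine-linear subspace of
codimension `d` meets `S` in exactly `k` points. -/
def HasVarietyDegree {n : ℕ} (S : Set (Fin n → ℂ)) (d k : ℕ) : Prop :=
  GenericProp (σ := Fin d × Option (Fin n)) fun c =>
    ({x ∈ S | ∀ j : Fin d, c (j, none) + ∑ i : Fin n, c (j, some i) * x i = 0}).ncard = k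

/-- The parametrization `ψ_{A,β}` with scaling vector `β`. -/
def psiBeta {d n : ℕ} (A : Matrix (Fin d) (Fin n) ℤ) (β : Fin n → ℂ) (v : Fin d → ℂ) :
    Fin n → ℂ :=
  fun ℓ => (β ℓ * ∏ k, v k ^ (A k ℓ) + (β ℓ)⁻¹ * ∏ k, v k ^ (-(A k ℓ))) / 2

/-- The toric Jacobi matrix `J_{A,b}(v) = ½ A · diag(β_ℓ v^{a_ℓ} - β_ℓ⁻¹ v^{-a_ℓ}) · Aᵀ`. -/
def toricJac {d n : ℕ} (A : Matrix (Fin d) (Fin n) ℤ) (β : Fin n → ℂ) (v : Fin d → ℂ) :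
    Matrix (Fin d) (Fin d) ℂ :=
  fun j k => (1 / 2 : ℂ) * ∑ ℓ, (A j ℓ : ℂ) *
    (β ℓ * ∏ k', v k' ^ (A k' ℓ) - (β ℓ)⁻¹ * ∏ k', v k' ^ (-(A k' ℓ))) * (A k ℓ : ℂ)

/-- The incidence variety `W_{A,b} = {(v,ω) : A ψ_{A,b}(v) = ω}`. -/
def Wset {d n : ℕ} (A : Matrix (Fin d) (Fin n) ℤ) (β : Fin n → ℂ) :
    Set ((Fin d → ℂ) × (Fin d → ℂ)) :=
  {p | (∀ k, p.1 k ≠ 0) ∧ ∀ i, ∑ ℓ, (A i ℓ : ℂ) * psiBeta A β p.1 ℓ = p.2 i}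

/-- The Lissajous discriminant `∇_{A,b}`, the Zariski closure of the branch locus. -/
def discLocus {d n : ℕ} (A : Matrix (Fin d) (Fin n) ℤ) (β : Fin n → ℂ) :
    Set (Fin d → ℂ) :=
  ZClosure {ω | ∃ v : Fin d → ℂ, (v, ω) ∈ Wset A β ∧ (toricJac A β v).det = 0}

/-- The projection `pr_ω : W → ℂ^d` has degree `e`: generic fibers have `e` points. -/
def HasProjDegree {d : ℕ} (W : Set ((Fin d → ℂ) × (Fin d → ℂ))) (e : ℕ) : Prop :=
  ∃ U : Set (Fin d → ℂ), ZClosed U ∧ U ≠ Set.univ ∧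
    ∀ ω ∉ U, ({v | (v, ω) ∈ W}).ncard = e

/-- The Lissajous discriminant of the full incidence matrix `A_G` for `b = 𝟏`:
the Zariski closure of the set of `ω` admitting a critical solution `v` with
`v_{d+1} = 1` and `rank J_{A_G,𝟏}(v) < d`. -/
def discLocusG {d n : ℕ} (AG : Matrix (Fin (d + 1)) (Fin n) ℤ) :
    Set (Fin (d + 1) → ℂ) :=
  ZClosure {ω | ∃ v : Fin (d + 1) → ℂ, (∀ k, v k ≠ 0) ∧ v (Fin.last d) = 1 ∧
    (∀ i, ∑ ℓ, (AG i ℓ : ℂ) * psiBeta AG (fun _ => -Complex.I) v ℓ = ω i) ∧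
    (toricJac AG (fun _ => -Complex.I) v).rank < d}

/-!
For an incidence matrix, `ψ` and the toric Jacobian depend on `v` only through the ratios
`v_s / v_t` along the edges, and the contribution of each edge is unchanged when the edge is
reversed. Sums over the oriented edges are therefore sums over the unordered edge set, which an
automorphism `σ` permutes; this makes `f_G` equivariant and gives `J(v ∘ σ⁻¹) = J(v)` with rows
and columns permuted by `σ⁻¹`, so the rank is unchanged. Rescaling `v` (which leaves the ratios
alone) restores `v_{d+1} = 1`, so the branch values are `Aut(G)`-stable, and their Zariski
closure is too because permuting coordinates is polynomial.
-/

open Complex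

theorem prod_zpow_sub_ite {V K : Type*} [Fintype V] [DecidableEq V] [CommGroupWithZero K]
    {s t : V} (hst : s ≠ t) (v : V → K) :
    ∏ k, v k ^ ((if k = s then 1 else 0) - (if k = t then 1 else 0) : ℤ) = v s / v t := by
  rw [Fintype.prod_eq_mul s t hst fun k hk => by simp [hk.1, hk.2]]
  simp [hst, hst.symm, div_eq_mul_inv]

section Orientation

variable {V ι : Type*} {G : SimpleGraph V} {src tgt : ι → V}

theorem bijective_mk_edge_of_orientation (hadj : ∀ l, G.Adj (src l) (tgt l))
    (hedges : ∀ e ∈ G.edgeSet, ∃! l, e = s(src l, tgt l)) :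
    Function.Bijective fun l => (⟨s(src l, tgt l), hadj l⟩ : G.edgeSet) := by
  refine ⟨fun a b hab => ?_, fun ⟨e, he⟩ => ?_⟩
  · obtain ⟨l, -, huniq⟩ := hedges s(src a, tgt a) (hadj a)
    exact (huniq a rfl).trans (huniq b (congrArg Subtype.val hab)).symm
  · obtain ⟨l, hl, -⟩ := hedges e he
    exact ⟨l, Subtype.ext hl.symm⟩

theorem sum_orientation_comp_iso {M : Type*} [Fintype ι] [AddCommMonoid M]
    (hadj : ∀ l, G.Adj (src l) (tgt l))
    (hedges : ∀ e ∈ G.edgeSet, ∃! l, e = s(src l, tgt l)) (σ : G ≃g G)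
    (F : V → V → M) (hF : ∀ s t, F s t = F t s) :
    ∑ l, F (σ (src l)) (σ (tgt l)) = ∑ l, F (src l) (tgt l) := by
  have hbij := bijective_mk_edge_of_orientation hadj hedges
  let _ : Fintype G.edgeSet := Fintype.ofBijective _ hbij
  let f : Sym2 V → M := Sym2.lift ⟨F, hF⟩
  calc ∑ l, F (σ (src l)) (σ (tgt l))
      = ∑ e : G.edgeSet, f (σ.mapEdgeSet e) := hbij.sum_comp fun e => f (σ.mapEdgeSet e)
    _ = ∑ e : G.edgeSet, f e := σ.mapEdgeSet.sum_comp fun e => f e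
    _ = ∑ l, F (src l) (tgt l) := (hbij.sum_comp fun e => f e).symm

end Orientation

def IsIncidenceMatrix {m n : ℕ} (A : Matrix (Fin m) (Fin n) ℤ) (src tgt : Fin n → Fin m) :
    Prop :=
  ∀ i l, A i l = (if i = src l then 1 else 0) - (if i = tgt l then 1 else 0)

theorem IsIncidenceMatrix.cast_apply {R : Type*} [Ring R] {m n : ℕ}
    {A : Matrix (Fin m) (Fin n) ℤ} {src tgt : Fin n → Fin m} (hA : IsIncidenceMatrix A src tgt)
    (i : Fin m) (l : Fin n) :
    (A i l : R) = (if i = src l then 1 else 0) - (if i = tgt l then 1 else 0) := by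
  rw [hA i l]
  push_cast
  rfl

section Incidence

variable {m n : ℕ} {src tgt : Fin n → Fin m} {A : Matrix (Fin m) (Fin n) ℤ}

theorem prod_zpow_incidence (hst : ∀ l, src l ≠ tgt l)
    (hA : IsIncidenceMatrix A src tgt) (v : Fin m → ℂ) (ℓ : Fin n) :
    ∏ k, v k ^ A k ℓ = v (src ℓ) / v (tgt ℓ) := by
  simp only [fun k => hA k ℓ]
  exact prod_zpow_sub_ite (hst ℓ) v

theorem prod_zpow_neg_incidence (hst : ∀ l, src l ≠ tgt l)
    (hA : IsIncidenceMatrix A src tgt) (v : Fin m → ℂ) (ℓ : Fin n) :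
    ∏ k, v k ^ (-A k ℓ) = v (tgt ℓ) / v (src ℓ) := by
  simp only [fun k => hA k ℓ, neg_sub]
  exact prod_zpow_sub_ite (hst ℓ).symm v

theorem psiBeta_incidence (hst : ∀ l, src l ≠ tgt l)
    (hA : IsIncidenceMatrix A src tgt) (v : Fin m → ℂ) (ℓ : Fin n) :
    psiBeta A (fun _ => -I) v ℓ =
      (-I * (v (src ℓ) / v (tgt ℓ)) + I * (v (tgt ℓ) / v (src ℓ))) / 2 := by
  rw [psiBeta, prod_zpow_incidence hst hA, prod_zpow_neg_incidence hst hA, inv_neg, inv_I,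
    neg_neg]

theorem toricJac_incidence (hst : ∀ l, src l ≠ tgt l)
    (hA : IsIncidenceMatrix A src tgt) (v : Fin m → ℂ) (j k : Fin m) :
    toricJac A (fun _ => -I) v j k = 1 / 2 * ∑ ℓ, (A j ℓ : ℂ) *
      (-I * (v (src ℓ) / v (tgt ℓ) + v (tgt ℓ) / v (src ℓ))) * (A k ℓ : ℂ) := by
  refine congrArg _ (Finset.sum_congr rfl fun ℓ _ => ?_)
  rw [prod_zpow_incidence hst hA, prod_zpow_neg_incidence hst hA, inv_neg, inv_I]
  ring

theorem psiBeta_smul (hst : ∀ l, src l ≠ tgt l)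
    (hA : IsIncidenceMatrix A src tgt) (β : Fin n → ℂ) {c : ℂ} (hc : c ≠ 0) (v : Fin m → ℂ) :
    psiBeta A β (c • v) = psiBeta A β v := by
  ext ℓ
  simp only [psiBeta, prod_zpow_incidence hst hA, prod_zpow_neg_incidence hst hA,
    Pi.smul_apply, smul_eq_mul, mul_div_mul_left _ _ hc]

theorem toricJac_smul (hst : ∀ l, src l ≠ tgt l)
    (hA : IsIncidenceMatrix A src tgt) (β : Fin n → ℂ) {c : ℂ} (hc : c ≠ 0) (v : Fin m → ℂ) :
    toricJac A β (c • v) = toricJac A β v := by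
  ext j k
  simp only [toricJac, prod_zpow_incidence hst hA, prod_zpow_neg_incidence hst hA,
    Pi.smul_apply, smul_eq_mul, mul_div_mul_left _ _ hc]

end Incidence

section Automorphism

variable {d n : ℕ} {G : SimpleGraph (Fin (d + 1))} {src tgt : Fin n → Fin (d + 1)}
  {AG : Matrix (Fin (d + 1)) (Fin n) ℤ}

theorem sum_incidence_mul_psiBeta_comp_symm (hadj : ∀ l, G.Adj (src l) (tgt l))
    (hedges : ∀ e ∈ G.edgeSet, ∃! l, e = s(src l, tgt l))
    (hAG : IsIncidenceMatrix AG src tgt)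
    (σ : G ≃g G) (v : Fin (d + 1) → ℂ) (k : Fin (d + 1)) :
    ∑ ℓ, (AG k ℓ : ℂ) * psiBeta AG (fun _ => -I) (fun k' => v (σ.symm k')) ℓ =
      ∑ ℓ, (AG (σ.symm k) ℓ : ℂ) * psiBeta AG (fun _ => -I) v ℓ := by
  have hst : ∀ l, src l ≠ tgt l := fun l => (hadj l).ne
  -- the sign flip of the incidence column under `s ↔ t` cancels the one of `ψ`
  let F (s t : Fin (d + 1)) : ℂ :=
    ((if σ.symm k = s then 1 else 0) - (if σ.symm k = t then 1 else 0)) *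
      ((-I * (v s / v t) + I * (v t / v s)) / 2)
  have hF : ∀ s t, F s t = F t s := fun s t => by simp only [F]; ring
  calc _ = ∑ ℓ, F (σ.symm (src ℓ)) (σ.symm (tgt ℓ)) := by
        simp [F, psiBeta_incidence hst hAG, hAG.cast_apply]
    _ = ∑ ℓ, F (src ℓ) (tgt ℓ) := sum_orientation_comp_iso hadj hedges σ.symm F hF
    _ = _ := by simp [F, psiBeta_incidence hst hAG, hAG.cast_apply]

theorem toricJac_comp_symm (hadj : ∀ l, G.Adj (src l) (tgt l))
    (hedges : ∀ e ∈ G.edgeSet, ∃! l, e = s(src l, tgt l))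
    (hAG : IsIncidenceMatrix AG src tgt)
    (σ : G ≃g G) (v : Fin (d + 1) → ℂ) :
    toricJac AG (fun _ => -I) (fun k' => v (σ.symm k')) =
      (toricJac AG (fun _ => -I) v).submatrix σ.symm σ.symm := by
  have hst : ∀ l, src l ≠ tgt l := fun l => (hadj l).ne
  ext j k
  let F (s t : Fin (d + 1)) : ℂ :=
    ((if σ.symm j = s then 1 else 0) - (if σ.symm j = t then 1 else 0)) *
      (-I * (v s / v t + v t / v s)) *
      ((if σ.symm k = s then 1 else 0) - (if σ.symm k = t then 1 else 0))
  have hF : ∀ s t, F s t = F t s := fun s t => by simp only [F]; ring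
  rw [Matrix.submatrix_apply, toricJac_incidence hst hAG, toricJac_incidence hst hAG]
  congr 1
  calc _ = ∑ ℓ, F (σ.symm (src ℓ)) (σ.symm (tgt ℓ)) := by simp [F, hAG.cast_apply]
    _ = ∑ ℓ, F (src ℓ) (tgt ℓ) := sum_orientation_comp_iso hadj hedges σ.symm F hF
    _ = _ := by simp [F, hAG.cast_apply]

end Automorphism

theorem zClosed_preimage_comp {m m' : ℕ} (g : Fin m → Fin m') {F : Set (Fin m → ℂ)}
    (hF : ZClosed F) : ZClosed ((fun x k => x (g k)) ⁻¹' F) := by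
  obtain ⟨I, rfl⟩ := hF
  refine ⟨MvPolynomial.rename g '' I, ?_⟩
  ext x
  simp only [Set.mem_preimage, Set.mem_ofPred_eq, Set.forall_mem_image, MvPolynomial.eval_rename]
  rfl

theorem mapsTo_comp_zClosure {m m' : ℕ} (g : Fin m → Fin m') {S : Set (Fin m' → ℂ)}
    {T : Set (Fin m → ℂ)} (h : Set.MapsTo (fun x k => x (g k)) S T) :
    Set.MapsTo (fun x k => x (g k)) (ZClosure S) (ZClosure T) := fun _ hx =>
  Set.mem_sInter.2 fun _ ⟨hFc, hTF⟩ =>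
    Set.mem_sInter.1 hx _ ⟨zClosed_preimage_comp g hFc, fun _ hy => hTF (h hy)⟩

/-- The set whose Zariski closure is `discLocusG AG`. -/
def branchValuesG {d n : ℕ} (AG : Matrix (Fin (d + 1)) (Fin n) ℤ) : Set (Fin (d + 1) → ℂ) :=
  {ω | ∃ v : Fin (d + 1) → ℂ, (∀ k, v k ≠ 0) ∧ v (Fin.last d) = 1 ∧
    (∀ i, ∑ ℓ, (AG i ℓ : ℂ) * psiBeta AG (fun _ => -I) v ℓ = ω i) ∧
    (toricJac AG (fun _ => -I) v).rank < d}

theorem mapsTo_comp_symm_branchValuesG {d n : ℕ} {G : SimpleGraph (Fin (d + 1))}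
    {src tgt : Fin n → Fin (d + 1)} {AG : Matrix (Fin (d + 1)) (Fin n) ℤ}
    (hadj : ∀ l, G.Adj (src l) (tgt l))
    (hedges : ∀ e ∈ G.edgeSet, ∃! l, e = s(src l, tgt l))
    (hAG : IsIncidenceMatrix AG src tgt)
    (σ : G ≃g G) :
    Set.MapsTo (fun ω k => ω (σ.symm k)) (branchValuesG AG) (branchValuesG AG) := by
  rintro ω ⟨v, hv, -, hvω, hrank⟩
  have hst : ∀ l, src l ≠ tgt l := fun l => (hadj l).ne
  set u : Fin (d + 1) → ℂ := fun k => v (σ.symm k)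
  have hc : (u (Fin.last d))⁻¹ ≠ 0 := inv_ne_zero (hv _)
  refine ⟨(u (Fin.last d))⁻¹ • u, fun k => mul_ne_zero hc (hv _), inv_mul_cancel₀ (hv _),
    fun i => ?_, ?_⟩
  · rw [psiBeta_smul hst hAG _ hc, sum_incidence_mul_psiBeta_comp_symm hadj hedges hAG σ v i,
      hvω]
  · rw [toricJac_smul hst hAG _ hc, toricJac_comp_symm hadj hedges hAG σ v]
    exact (Matrix.rank_submatrix _ σ.symm.toEquiv σ.symm.toEquiv).trans_lt hrank

theorem stmt19_general {d n : ℕ} (G : SimpleGraph (Fin (d + 1)))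
    (src tgt : Fin n → Fin (d + 1))
    (hadj : ∀ l, G.Adj (src l) (tgt l))
    (hedges : ∀ e ∈ G.edgeSet, ∃! l : Fin n, e = s(src l, tgt l))
    (AG : Matrix (Fin (d + 1)) (Fin n) ℤ)
    (hAG : ∀ (i : Fin (d + 1)) (l : Fin n), AG i l =
      (if i = src l then 1 else 0) - (if i = tgt l then 1 else 0))
    (σ : G ≃g G) :
    (∀ v : Fin (d + 1) → ℂ, (∀ k, v k ≠ 0) →
      (fun k => ∑ ℓ, (AG k ℓ : ℂ) *
        psiBeta AG (fun _ => -Complex.I) (fun k' => v (σ.symm k')) ℓ) =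
      fun k => ∑ ℓ, (AG (σ.symm k) ℓ : ℂ) *
        psiBeta AG (fun _ => -Complex.I) v ℓ) ∧
    (∀ ω : Fin (d + 1) → ℂ, ω ∈ discLocusG AG ↔
      (fun k => ω (σ.symm k)) ∈ discLocusG AG) := by
  have hstable (ρ : G ≃g G) :
      Set.MapsTo (fun ω k => ω (ρ.symm k)) (discLocusG AG) (discLocusG AG) :=
    mapsTo_comp_zClosure _ (mapsTo_comp_symm_branchValuesG hadj hedges hAG ρ)
  refine ⟨fun v _ => funext (sum_incidence_mul_psiBeta_comp_symm hadj hedges hAG σ v),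
    fun ω => ⟨fun hω => hstable σ hω, fun hω => ?_⟩⟩
  simpa using hstable σ.symm hω

/-- Proposition 6.7: the map `f_G(v) = A_G ψ_{A_G,𝟏}(v)` is `Aut(G)`-equivariant, and
consequently the Lissajous discriminant `∇_{A_G,𝟏}` is stable under the coordinate
permutation action of every graph automorphism `σ`. -/
theorem stmt19 {d n : ℕ} (G : SimpleGraph (Fin (d + 1))) (hconn : G.Connected)
    (src tgt : Fin n → Fin (d + 1))
    (hadj : ∀ l, G.Adj (src l) (tgt l))
    (hedges : ∀ e ∈ G.edgeSet, ∃! l : Fin n, e = s(src l, tgt l))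
    (AG : Matrix (Fin (d + 1)) (Fin n) ℤ)
    (hAG : ∀ (i : Fin (d + 1)) (l : Fin n), AG i l =
      (if i = src l then 1 else 0) - (if i = tgt l then 1 else 0))
    (σ : G ≃g G) :
    (∀ v : Fin (d + 1) → ℂ, (∀ k, v k ≠ 0) →
      (fun k => ∑ ℓ, (AG k ℓ : ℂ) *
        psiBeta AG (fun _ => -Complex.I) (fun k' => v (σ.symm k')) ℓ) =
      fun k => ∑ ℓ, (AG (σ.symm k) ℓ : ℂ) *
        psiBeta AG (fun _ => -Complex.I) v ℓ) ∧
    (∀ ω : Fin (d + 1) → ℂ, ω ∈ discLocusG AG ↔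
      (fun k => ω (σ.symm k)) ∈ discLocusG AG) :=
  stmt19_general G src tgt hadj hedges AG hAG σ
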